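/- (Claim 2 of Theorem 3.3) In the Gaussian-mixture setup with γ = exp(−π(σ−C)²): if for some index i, hᵢ > max_{j≠i} h_j + γ·Σ_k h_k, then the mode of q[h] lies in B_σ(xᵢ). -/

import Mathlib

noncomputable def unitGauss (C : ℝ) (i : ℕ) (x : ℝ) : ℝ :=
  Real.exp (-Real.pi * (x - C * i) ^ 2)

noncomputable def gaussSigma : ℝ := 1 / Real.sqrt (2 * Real.pi)

/-- `m` is the (unique) mode of the density `p`: a strict global maximizer. -/
def IsModeOf (m : ℝ) (p : ℝ → ℝ) : Prop := ∀ x, x ≠ m → p x < p m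

/-!
Suppose the mode `m` lies at distance `≥ σ` from `xᵢ = C i`. If `m` is within `σ` of another
centre `x_k`, all remaining centres are at distance `≥ C - σ` from `m`, so
`q(m) ≤ h_k + γ Σ h < hᵢ ≤ q(xᵢ)`, contradicting maximality. Otherwise every centre is at
distance `≥ σ` from `m`. Since `σ` is the inflection distance of a bump, `q` is then convex on a
short interval with endpoint `m` (unless both `m ± σ` are centres), and a differentiable function
with a local maximum at an endpoint of an interval of convexity cannot drop along it. If both
`m ± σ` are centres, then `C ≤ 2σ`, so every centre is at distance `≥ C - σ` and the first bound
applies again.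
-/

open Real Set Filter Topology

lemma two_pi_mul_gaussSigma_sq : 2 * π * gaussSigma ^ 2 = 1 := by
  rw [gaussSigma, div_pow, one_pow, sq_sqrt (by positivity)]
  field_simp

lemma gaussSigma_pos : 0 < gaussSigma := by
  unfold gaussSigma
  positivity

noncomputable def gaussBump (c x : ℝ) : ℝ := exp (-π * (x - c) ^ 2)

lemma gaussBump_le_gaussBump {c x d y : ℝ} (h : |y - d| ≤ |x - c|) :
    gaussBump c x ≤ gaussBump d y := by
  refine exp_le_exp.mpr (mul_le_mul_of_nonpos_left (sq_le_sq.mpr h) ?_)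
  linarith [pi_pos]

lemma gaussBump_le_one (c x : ℝ) : gaussBump c x ≤ 1 := by
  simpa [gaussBump] using gaussBump_le_gaussBump (d := x) (y := x) (by simp : |x - x| ≤ |x - c|)

lemma hasDerivAt_gaussBump (c x : ℝ) :
    HasDerivAt (gaussBump c) (gaussBump c x * (-2 * π * (x - c))) x := by
  have : HasDerivAt (fun y ↦ -π * (y - c) ^ 2) (-π * (2 * (x - c) ^ 1 * 1)) x :=
    (((hasDerivAt_id x).sub_const c).pow 2).const_mul (-π)
  exact this.exp.congr_deriv (by rw [gaussBump]; ring)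

lemma hasDerivAt_deriv_gaussBump (c x : ℝ) :
    HasDerivAt (fun y ↦ gaussBump c y * (-2 * π * (y - c)))
      (gaussBump c x * (2 * π * (2 * π * (x - c) ^ 2 - 1))) x :=
  ((hasDerivAt_gaussBump c x).mul (((hasDerivAt_id x).sub_const c).const_mul (-2 * π))).congr_deriv
    (by simp only [id]; ring)

lemma convexOn_gaussBump {s : Set ℝ} {c : ℝ} (hs : Convex ℝ s)
    (hfar : ∀ x ∈ s, gaussSigma ≤ |x - c|) : ConvexOn ℝ s (gaussBump c) := by
  refine convexOn_of_hasDerivWithinAt2_nonneg hs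
    (fun x _ ↦ (hasDerivAt_gaussBump c x).continuousAt.continuousWithinAt)
    (fun x _ ↦ (hasDerivAt_gaussBump c x).hasDerivWithinAt)
    (fun x _ ↦ (hasDerivAt_deriv_gaussBump c x).hasDerivWithinAt) fun x hx ↦ ?_
  have hsq : gaussSigma ^ 2 ≤ (x - c) ^ 2 :=
    sq_le_sq.mpr (by rw [abs_of_pos gaussSigma_pos]; exact hfar x (interior_subset hx))
  have hone : 1 ≤ 2 * π * (x - c) ^ 2 := by
    rw [← two_pi_mul_gaussSigma_sq]
    gcongr
  exact mul_nonneg (exp_pos _).le (mul_nonneg (by positivity) (sub_nonneg.2 hone))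

lemma le_abs_mul_sub_mul_of_ne {C : ℝ} (hC : 0 ≤ C) {k l : ℕ} (hkl : k ≠ l) :
    C ≤ |C * k - C * l| := by
  have : (1 : ℝ) ≤ |(k : ℝ) - l| := by
    exact_mod_cast Int.one_le_abs (sub_ne_zero.mpr (by exact_mod_cast hkl : (k : ℤ) ≠ l))
  rw [← mul_sub, abs_mul, abs_of_nonneg hC]
  exact le_mul_of_one_le_right hC this

lemma IsLocalMax.le_of_convexOn_Icc {f : ℝ → ℝ} {a b : ℝ} (hmax : IsLocalMax f a)
    (hf : DifferentiableAt ℝ f a) (hconv : ConvexOn ℝ (Icc a b) f) (hab : a < b) :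
    f a ≤ f b := by
  have := hconv.deriv_le_slope (left_mem_Icc.2 hab.le) (right_mem_Icc.2 hab.le) hab hf
  rw [hmax.deriv_eq_zero, slope_def_field] at this
  rwa [le_div_iff₀ (sub_pos.2 hab), zero_mul, sub_nonneg] at this

lemma IsLocalMax.le_of_convexOn_Icc' {f : ℝ → ℝ} {a b : ℝ} (hmax : IsLocalMax f b)
    (hf : DifferentiableAt ℝ f b) (hconv : ConvexOn ℝ (Icc a b) f) (hab : a < b) :
    f b ≤ f a := by
  have := hconv.slope_le_deriv (left_mem_Icc.2 hab.le) (right_mem_Icc.2 hab.le) hab hf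
  rw [hmax.deriv_eq_zero, slope_def_field] at this
  rwa [div_le_iff₀ (sub_pos.2 hab), zero_mul, sub_nonpos] at this

section Centers

variable {ι : Type*} {c : ι → ℝ} {m r : ℝ}

lemma exists_Icc_right_forall_le_abs_sub [Finite ι] (hfar : ∀ j, r ≤ |m - c j|)
    (hgap : ∀ j, c j ≠ m + r) : ∃ b > m, ∀ x ∈ Icc m b, ∀ j, r ≤ |x - c j| := by
  have hev : ∀ j, ∀ᶠ b in 𝓝 m, ∀ x ∈ Icc m b, r ≤ |x - c j| := by
    intro j
    rcases le_or_gt (c j) (m - r) with hleft | hright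
    · exact Eventually.of_forall fun b x hx ↦ le_abs.mpr (Or.inl (by linarith [hx.1]))
    · have : m + r < c j := by
        rcases le_abs.mp (hfar j) with h | h
        · linarith
        · exact lt_of_le_of_ne (by linarith) (hgap j).symm
      filter_upwards [eventually_lt_nhds (show m < c j - r by linarith)] with b hb x hx
      exact le_abs.mpr (Or.inr (by linarith [hx.2]))
  obtain ⟨b, hb, hmb⟩ :=
    ((eventually_nhdsWithin_of_eventually_nhds (eventually_all.mpr hev)).and
      (self_mem_nhdsWithin (s := Ioi m))).exists
  exact ⟨b, hmb, fun x hx j ↦ hb j x hx⟩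

lemma exists_Icc_left_forall_le_abs_sub [Finite ι] (hfar : ∀ j, r ≤ |m - c j|)
    (hgap : ∀ j, c j ≠ m - r) : ∃ a < m, ∀ x ∈ Icc a m, ∀ j, r ≤ |x - c j| := by
  obtain ⟨b, hmb, hb⟩ := exists_Icc_right_forall_le_abs_sub (c := fun j ↦ -c j) (m := -m)
    (fun j ↦ by rw [neg_sub_neg, abs_sub_comm]; exact hfar j)
    (fun j h ↦ hgap j (by linarith))
  refine ⟨-b, by linarith, fun x hx j ↦ ?_⟩
  have := hb (-x) ⟨by linarith [hx.2], by linarith [hx.1]⟩ j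
  rwa [neg_sub_neg, abs_sub_comm] at this

lemma exists_forall_ne_le_abs_sub_or_forall_le_abs_sub {C : ℝ} (hr : 0 < r)
    (hsep : ∀ k l, k ≠ l → C ≤ |c k - c l|) {i : ι} (hi : r ≤ |m - c i|) :
    (∃ k ≠ i, ∀ l ≠ k, C - r ≤ |m - c l|) ∨
      (∀ j, r ≤ |m - c j|) ∧ ((∀ j, c j ≠ m + r) ∨ ∀ j, c j ≠ m - r) := by
  by_cases hnear : ∃ k, |m - c k| < r
  · obtain ⟨k, hk⟩ := hnear
    refine .inl ⟨k, by rintro rfl; linarith, fun l hl ↦ ?_⟩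
    have := abs_sub_le (c l) m (c k)
    rw [abs_sub_comm (c l) m] at this
    linarith [hsep l k hl]
  push Not at hnear
  by_cases hboth : (∃ k, c k = m + r) ∧ ∃ l, c l = m - r
  · obtain ⟨⟨k, hk⟩, l, hl⟩ := hboth
    have hkl : k ≠ l := by rintro rfl; linarith
    have hC : C ≤ 2 * r := by
      have := hsep k l hkl
      rwa [hk, hl, show m + r - (m - r) = 2 * r by ring, abs_of_pos (by linarith)] at this
    have hfar : ∀ j, C - r ≤ |m - c j| := fun j ↦ by linarith [hnear j]
    left
    by_cases hki : k = i
    · exact ⟨l, hki ▸ hkl.symm, fun j _ ↦ hfar j⟩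
    · exact ⟨k, hki, fun j _ ↦ hfar j⟩
  · exact .inr ⟨hnear, (not_and_or.mp hboth).imp not_exists.mp not_exists.mp⟩

end Centers

section Mixture

variable {ι : Type*} [Fintype ι] (w c : ι → ℝ)

noncomputable def gaussMixture (x : ℝ) : ℝ := ∑ j, w j * gaussBump (c j) x

variable {w}

lemma le_gaussMixture_self (hw : ∀ j, 0 ≤ w j) (k : ι) : w k ≤ gaussMixture w c (c k) := by
  have : w k * gaussBump (c k) (c k) = w k := by simp [gaussBump]
  rw [← this]
  exact Finset.single_le_sum (f := fun j ↦ w j * gaussBump (c j) (c k))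
    (fun j _ ↦ mul_nonneg (hw j) (exp_pos _).le) (Finset.mem_univ k)

lemma gaussMixture_le (hw : ∀ j, 0 ≤ w j) (k : ι) {x d y : ℝ}
    (hfar : ∀ l ≠ k, |y - d| ≤ |x - c l|) :
    gaussMixture w c x ≤ w k + gaussBump d y * ∑ l, w l := by
  classical
  calc gaussMixture w c x
      = w k * gaussBump (c k) x + ∑ l ∈ Finset.univ.erase k, w l * gaussBump (c l) x :=
        (Finset.add_sum_erase _ _ (Finset.mem_univ k)).symm
    _ ≤ w k + ∑ l ∈ Finset.univ.erase k, w l * gaussBump d y := by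
        refine add_le_add (mul_le_of_le_one_right (hw k) (gaussBump_le_one _ _))
          (Finset.sum_le_sum fun l hl ↦ ?_)
        exact mul_le_mul_of_nonneg_left
          (gaussBump_le_gaussBump (hfar l (Finset.ne_of_mem_erase hl))) (hw l)
    _ ≤ w k + gaussBump d y * ∑ l, w l := by
        rw [← Finset.sum_mul, mul_comm]
        exact add_le_add_right
          (mul_le_mul_of_nonneg_left (Finset.sum_le_univ_sum_of_nonneg hw) (exp_pos _).le) _

lemma convexOn_gaussMixture (hw : ∀ j, 0 ≤ w j) {s : Set ℝ} (hs : Convex ℝ s)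
    (hfar : ∀ x ∈ s, ∀ j, gaussSigma ≤ |x - c j|) : ConvexOn ℝ s (gaussMixture w c) := by
  have := Finset.sum_induction (s := Finset.univ) (fun j (x : ℝ) ↦ w j * gaussBump (c j) x)
    (ConvexOn ℝ s) (fun _ _ ↦ ConvexOn.add) (convexOn_const 0 hs)
    fun j _ ↦ (convexOn_gaussBump hs fun x hx ↦ hfar x hx j).smul (hw j)
  convert this using 1
  ext x
  simp [gaussMixture, Finset.sum_apply]

lemma not_isModeOf_gaussMixture (hw : ∀ j, 0 ≤ w j) {m : ℝ}
    (hfar : ∀ j, gaussSigma ≤ |m - c j|)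
    (hgap : (∀ j, c j ≠ m + gaussSigma) ∨ ∀ j, c j ≠ m - gaussSigma) :
    ¬ IsModeOf m (gaussMixture w c) := by
  intro hmode
  have hmax : IsLocalMax (gaussMixture w c) m := Eventually.of_forall fun x ↦
    (eq_or_ne x m).elim (fun h ↦ h ▸ le_rfl) fun h ↦ (hmode x h).le
  have hdiff : DifferentiableAt ℝ (gaussMixture w c) m :=
    DifferentiableAt.fun_sum fun j _ ↦ (hasDerivAt_gaussBump (c j) m).differentiableAt.const_mul _
  rcases hgap with hgap | hgap
  · obtain ⟨b, hmb, hb⟩ := exists_Icc_right_forall_le_abs_sub hfar hgap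
    exact (hmode b hmb.ne').not_ge <|
      hmax.le_of_convexOn_Icc hdiff (convexOn_gaussMixture c hw (convex_Icc m b) hb) hmb
  · obtain ⟨a, ham, ha⟩ := exists_Icc_left_forall_le_abs_sub hfar hgap
    exact (hmode a ham.ne).not_ge <|
      hmax.le_of_convexOn_Icc' hdiff (convexOn_gaussMixture c hw (convex_Icc a m) ha) ham

end Mixture

/-- Claim 2 of Theorem 3.3: with `γ = exp(−π(σ−C)²)`, if
`hᵢ > max_{j≠i} h_j + γ·Σ_k h_k`, then the mode of `q[h]` lies in `B_σ(xᵢ)`. -/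
theorem gaussian_mixture_mode_in_ball
    (t : ℕ) (C : ℝ) (hC : gaussSigma < C)
    (h : Fin (t + 1) → ℝ) (hpos : ∀ i, 0 < h i)
    (i : Fin (t + 1))
    (hbig : ∀ j, j ≠ i →
      h j + Real.exp (-Real.pi * (gaussSigma - C) ^ 2) * (∑ k, h k) < h i)
    (m : ℝ)
    (hmode : IsModeOf m (fun z => ∑ j : Fin (t + 1), h j * unitGauss C j z)) :
    |m - C * (i : ℝ)| < gaussSigma := by
  by_contra! hfar
  set c : Fin (t + 1) → ℝ := fun j ↦ C * (j : ℕ)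
  change gaussSigma ≤ |m - c i| at hfar
  change IsModeOf m (gaussMixture h c) at hmode
  have hσ := gaussSigma_pos
  have hw : ∀ j, 0 ≤ h j := fun j ↦ (hpos j).le
  have hsep : ∀ k l, k ≠ l → C ≤ |c k - c l| := fun k l hkl ↦
    le_abs_mul_sub_mul_of_ne (by linarith) (Fin.val_ne_of_ne hkl)
  have hmi : h i < gaussMixture h c m :=
    (le_gaussMixture_self c hw i).trans_lt (hmode _ fun he ↦ by simp [← he] at hfar; linarith)
  rcases exists_forall_ne_le_abs_sub_or_forall_le_abs_sub hσ hsep hfar with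
    ⟨k, hki, hk⟩ | ⟨hall, hgap⟩
  · have hγ : |gaussSigma - C| = C - gaussSigma := by
      rw [abs_sub_comm, abs_of_pos (sub_pos.2 hC)]
    exact (hbig k hki).not_gt (hmi.trans_le (gaussMixture_le c hw k fun l hl ↦ hγ ▸ hk l hl))
  · exact not_isModeOf_gaussMixture c hw hall hgap hmode
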